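/- The non-negativity of global quantum discord is equivalent to the inequality Σ_{j=1}^N S(ρ_{A_j}) − S(ρ) ≥ Σ_{j=1}^N S(Φ_j(ρ_{A_j})) − S(Φ(ρ)): a non-selective product projective measurement cannot increase the total (multipartite mutual-information) correlation Σ_j S(ρ_{A_j}) − S(ρ). -/

import Mathlib

open scoped Kronecker
open Matrix
open scoped ComplexOrder

/-- Matrix logarithm (base 2) of a Hermitian matrix, via its spectral decomposition;
junk value `0` on non-Hermitian input.  `Real.logb 2 0 = 0` encodes the usual
`0 log 0 = 0` convention. -/
noncomputable def matLog2 {n : Type*} [Fintype n] [DecidableEq n] (A : Matrix n n ℂ) :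
    Matrix n n ℂ :=
  if hA : A.IsHermitian then
    (hA.eigenvectorUnitary : Matrix n n ℂ) *
      Matrix.diagonal (fun i => (Real.logb 2 (hA.eigenvalues i) : ℂ)) *
      (star (hA.eigenvectorUnitary : Matrix n n ℂ))
  else 0

/-- von Neumann entropy (base-2): `S(ρ) = -Tr(ρ log₂ ρ)`. -/
noncomputable def vN {n : Type*} [Fintype n] [DecidableEq n] (ρ : Matrix n n ℂ) : ℝ :=
  -(Matrix.trace (ρ * matLog2 ρ)).re

/-- Quantum relative entropy (base-2): `S(ρ‖σ) = Tr(ρ log₂ ρ) - Tr(ρ log₂ σ)`. -/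
noncomputable def relEnt {n : Type*} [Fintype n] [DecidableEq n] (ρ σ : Matrix n n ℂ) : ℝ :=
  (Matrix.trace (ρ * matLog2 ρ)).re - (Matrix.trace (ρ * matLog2 σ)).re

/-- A density operator: positive semidefinite with unit trace. -/
noncomputable def IsDensity {n : Type*} [Fintype n] [DecidableEq n] (ρ : Matrix n n ℂ) : Prop :=
  ρ.PosSemidef ∧ ρ.trace = 1

/-- Partial trace over the second (B) factor. -/
noncomputable def ptrB {m n : Type*} [Fintype n] (ρ : Matrix (m × n) (m × n) ℂ) : Matrix m m ℂ :=
  Matrix.of fun a b => ∑ j : n, ρ (a, j) (b, j)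

/-- Partial trace over the first (A) factor. -/
noncomputable def ptrA {m n : Type*} [Fintype m] (ρ : Matrix (m × n) (m × n) ℂ) : Matrix n n ℂ :=
  Matrix.of fun a b => ∑ i : m, ρ (i, a) (i, b)

/-- A complete orthonormal family of rank-one projectors (a rank-one von Neumann
measurement): Hermitian idempotents, mutually orthogonal, summing to the identity,
each of unit trace (rank one). -/
def MeasFam {ι n : Type*} [Fintype ι] [Fintype n] [DecidableEq n]
    (P : ι → Matrix n n ℂ) : Prop :=
  (∀ i, (P i).IsHermitian) ∧ (∀ i, P i * P i = P i) ∧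
    (∀ i j, i ≠ j → P i * P j = 0) ∧ (∑ i, P i = 1) ∧ (∀ i, (P i).trace = 1)

/-- Pinching (non-selective projective measurement) channel. -/
noncomputable def pinch {ι n : Type*} [Fintype ι] [Fintype n] (P : ι → Matrix n n ℂ)
    (ρ : Matrix n n ℂ) : Matrix n n ℂ :=
  ∑ i, P i * ρ * P i

variable {N : ℕ} {d : Fin N → Type*} [∀ i, Fintype (d i)] [∀ i, DecidableEq (d i)]

/-- Extend a configuration on the sites `≠ j` by the value `a` at site `j`. -/
noncomputable def extendAt (j : Fin N) (a : d j)
    (f : ∀ i : {i : Fin N // i ≠ j}, d i.1) : ∀ i, d i :=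
  fun i => if h : i = j then cast (congrArg d h).symm a else f ⟨i, h⟩

/-- The reduced density operator of the `j`-th subsystem (partial trace over all
other factors). -/
noncomputable def redAt (j : Fin N) (ρ : Matrix (∀ i, d i) (∀ i, d i) ℂ) :
    Matrix (d j) (d j) ℂ :=
  Matrix.of fun a b => ∑ f : ∀ i : {i : Fin N // i ≠ j}, d i.1,
    ρ (extendAt j a f) (extendAt j b f)

/-- The product projector `Π_k = Π_{A_1}^{k_1} ⊗ ⋯ ⊗ Π_{A_N}^{k_N}`. -/
noncomputable def bigProj (P : ∀ i, d i → Matrix (d i) (d i) ℂ) (k : ∀ i, d i) :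
    Matrix (∀ i, d i) (∀ i, d i) ℂ :=
  Matrix.of fun a b => ∏ i, P i (k i) (a i) (b i)

/-- The global product measurement channel `Φ = Φ_1 ⊗ ⋯ ⊗ Φ_N`. -/
noncomputable def bigPinch (P : ∀ i, d i → Matrix (d i) (d i) ℂ)
    (ρ : Matrix (∀ i, d i) (∀ i, d i) ℂ) : Matrix (∀ i, d i) (∀ i, d i) ℂ :=
  ∑ k : ∀ i, d i, bigProj P k * ρ * bigProj P k

/-!
For a pinching `Φ(σ) = ∑ᵢ Qᵢ σ Qᵢ` by complete orthogonal idempotents, every `Qᵢ` commutes with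
`Φ(σ)`, hence with `log Φ(σ)`, so `Tr(Φ(σ) log Φ(σ)) = Tr(σ log Φ(σ))` and therefore
`S(σ ‖ Φ(σ)) = S(Φ(σ)) - S(σ)`. Applied to `ρ` with the product measurement and to each marginal
with the local measurements, this turns the discord into
`(S(Φ(ρ)) - S(ρ)) - ∑ⱼ (S(Φⱼ(ρ_{Aⱼ})) - S(ρ_{Aⱼ}))`, and the two inequalities are rearrangements of
each other.
-/

section Pinching

variable {ι n : Type*} [Fintype ι] [Fintype n] [DecidableEq n]

theorem matLog2_eq_cfc (A : Matrix n n ℂ) : matLog2 A = cfc (Real.logb 2) A := by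
  by_cases hA : A.IsHermitian
  · rw [matLog2, dif_pos hA, hA.cfc_eq, IsHermitian.cfc, Unitary.conjStarAlgAut_apply]
    rfl
  · rw [matLog2, dif_neg hA]
    exact (cfc_apply_of_not_predicate A hA).symm

theorem Commute.matLog2_left {A B : Matrix n n ℂ} (h : Commute A B) :
    Commute (matLog2 A) B := by
  rw [matLog2_eq_cfc]
  exact h.cfc_real _

theorem MeasFam.completeOrthogonalIdempotents {P : ι → Matrix n n ℂ} (hP : MeasFam P) :
    CompleteOrthogonalIdempotents P where
  idem := hP.2.1
  ortho _ _ hij := hP.2.2.1 _ _ hij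
  complete := hP.2.2.2.1

theorem OrthogonalIdempotents.commute_pinch [DecidableEq ι] {Q : ι → Matrix n n ℂ}
    (hQ : OrthogonalIdempotents Q) (ρ : Matrix n n ℂ) (k : ι) : Commute (Q k) (pinch Q ρ) := by
  refine Commute.sum_right _ _ _ fun i _ => ?_
  have hleft : Q k * (Q i * ρ * Q i) = (Q k * Q i) * ρ * Q i := by noncomm_ring
  have hright : Q i * ρ * Q i * Q k = Q i * ρ * (Q i * Q k) := by noncomm_ring
  rw [Commute, SemiconjBy, hleft, hright, hQ.mul_eq, hQ.mul_eq]
  obtain rfl | hki := eq_or_ne k i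
  · simp only [if_true, Matrix.mul_assoc]
  · simp [hki, hki.symm]

theorem trace_pinch_mul {Q : ι → Matrix n n ℂ} (hidem : ∀ i, IsIdempotentElem (Q i))
    (hsum : ∑ i, Q i = 1) (ρ : Matrix n n ℂ) {L : Matrix n n ℂ} (hL : ∀ i, Commute (Q i) L) :
    (pinch Q ρ * L).trace = (ρ * L).trace := by
  have hterm : ∀ i, (Q i * ρ * Q i * L).trace = (ρ * (Q i * L)).trace := fun i => by
    have hQLQ : Q i * L * Q i = Q i * L := by
      rw [Matrix.mul_assoc, ← (hL i).eq, ← Matrix.mul_assoc, (hidem i).eq]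
    rw [Matrix.mul_assoc, Matrix.mul_assoc, Matrix.trace_mul_comm, Matrix.mul_assoc,
      Matrix.mul_assoc, ← Matrix.mul_assoc (Q i), hQLQ]
  rw [pinch, Finset.sum_mul, Matrix.trace_sum, Finset.sum_congr rfl fun i _ => hterm i,
    ← Matrix.trace_sum, ← Finset.mul_sum, ← Finset.sum_mul, hsum, Matrix.one_mul]

theorem relEnt_pinch [DecidableEq ι] {Q : ι → Matrix n n ℂ}
    (hQ : CompleteOrthogonalIdempotents Q) (ρ : Matrix n n ℂ) :
    relEnt ρ (pinch Q ρ) = vN (pinch Q ρ) - vN ρ := by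
  have htrace := trace_pinch_mul hQ.idem hQ.complete ρ
    fun k => ((hQ.commute_pinch ρ k).symm.matLog2_left).symm
  rw [relEnt, vN, vN, ← htrace]
  ring

end Pinching

section ProductMeasurement

-- Shadows the variables above so that `bigProj_mul` does not pick up `DecidableEq` instances.
variable {N : ℕ} {d : Fin N → Type*} [∀ i, Fintype (d i)]

theorem bigProj_mul (P : ∀ i, d i → Matrix (d i) (d i) ℂ) (k l : ∀ i, d i) :
    bigProj P k * bigProj P l = Matrix.of fun a b => ∏ i, (P i (k i) * P i (l i)) (a i) (b i) := by
  ext a b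
  simp only [Matrix.mul_apply, bigProj, Matrix.of_apply, ← Finset.prod_mul_distrib]
  rw [Fintype.prod_sum]

variable [∀ i, DecidableEq (d i)]

theorem sum_bigProj {P : ∀ i, d i → Matrix (d i) (d i) ℂ} (hsum : ∀ i, ∑ x, P i x = 1) :
    ∑ k, bigProj P k = 1 := by
  ext a b
  simp only [Matrix.sum_apply, bigProj, Matrix.of_apply]
  rw [← Fintype.prod_sum (f := fun i x => P i x (a i) (b i))]
  simp only [← Matrix.sum_apply, hsum, Matrix.one_apply, Finset.prod_boole, Finset.mem_univ,
    forall_const, ← funext_iff]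

theorem completeOrthogonalIdempotents_bigProj {P : ∀ i, d i → Matrix (d i) (d i) ℂ}
    (hP : ∀ i, CompleteOrthogonalIdempotents (P i)) :
    CompleteOrthogonalIdempotents (bigProj P) where
  idem k := by
    rw [IsIdempotentElem, bigProj_mul]
    simp only [(hP _).idem _ |>.eq]
    rfl
  ortho k l hkl := by
    obtain ⟨i, hi⟩ := Function.ne_iff.mp hkl
    rw [bigProj_mul]
    ext a b
    exact Finset.prod_eq_zero (Finset.mem_univ i) (by rw [(hP i).ortho hi]; rfl)
  complete := sum_bigProj fun i => (hP i).complete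

end ProductMeasurement

theorem stmt8_general (ρ : Matrix (∀ i, d i) (∀ i, d i) ℂ)
    (P : ∀ i, d i → Matrix (d i) (d i) ℂ) (hP : ∀ i, MeasFam (P i)) :
    (0 ≤ relEnt ρ (bigPinch P ρ) -
        ∑ j, relEnt (redAt j ρ) (pinch (P j) (redAt j ρ))) ↔
      (∑ j, vN (pinch (P j) (redAt j ρ))) - vN (bigPinch P ρ) ≤
        (∑ j, vN (redAt j ρ)) - vN ρ := by
  have hlocal := fun i => (hP i).completeOrthogonalIdempotents
  have hglobal : relEnt ρ (bigPinch P ρ) = vN (bigPinch P ρ) - vN ρ :=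
    relEnt_pinch (completeOrthogonalIdempotents_bigProj hlocal) ρ
  simp only [hglobal, relEnt_pinch (hlocal _), Finset.sum_sub_distrib]
  constructor <;> intro h <;> linarith

/-- non-negativity of global quantum discord is equivalent to the
statement that a non-selective product projective measurement cannot increase the
total multipartite mutual-information correlation. -/
theorem stmt8 (ρ : Matrix (∀ i, d i) (∀ i, d i) ℂ) (hρ : IsDensity ρ)
    (P : ∀ i, d i → Matrix (d i) (d i) ℂ) (hP : ∀ i, MeasFam (P i)) :
    (0 ≤ relEnt ρ (bigPinch P ρ) -
        ∑ j, relEnt (redAt j ρ) (pinch (P j) (redAt j ρ))) ↔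
      (∑ j, vN (pinch (P j) (redAt j ρ))) - vN (bigPinch P ρ) ≤
        (∑ j, vN (redAt j ρ)) - vN ρ :=
  stmt8_general ρ P hP
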